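/- arXiv:1301.7156 — 4 statements merged into one kernel-verified Lean document; each statement's English description precedes it below -/
import Mathlib

section
/- Let p > 1 and let ν be a probability measure on the circle 𝕋 admitting a continuous density with respect to λ (still denoted ν). Then the potential U_p is twice continuously differentiable on 𝕋 and for every x ∈ 𝕋, U_p''(x) = p(p−1) ∫_𝕋 d(y,x)^{p−2} ν(dy) − p π^{p−2} ν(x+π). -/
open MeasureTheory Real Set Filter

noncomputable section

instance : Fact (0 < 2 * π) := ⟨Real.two_pi_pos⟩

/-- The circle `𝕋 = ℝ/(2πℤ)`. -/
abbrev 𝕋 : Type := AddCircle (2 * π)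

/-- The normalized Haar probability measure `λ` on the circle. -/
def lam : Measure 𝕋 := (ENNReal.ofReal (2 * π))⁻¹ • volume

/-!
Unrolling the circle at `x`, the potential `∫ d(x, y) ^ r ν(dy)` is `(2π)⁻¹` times the sum of the
two one-sided convolutions `∫₀^π s ^ r G(x ∓ s) ds` of the lifted density `G` with `s ^ r`.
For `q > 0`, integrating by parts against a primitive of `G` and then differentiating under the
integral sign gives `d/dx ∫₀^π s ^ q G(x - s) ds = q ∫₀^π s ^ (q - 1) G(x - s) ds - π ^ q G(x - π)`.
Applying this with `q = p` and then `q = p - 1`, the boundary terms `π ^ q G(x ∓ π)` cancel in the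
first derivative and, by `2π`-periodicity of `G`, add up to `-2 π ^ (p - 1) G(x + π)` in the second.
-/

section Convolution

variable {k G H : ℝ → ℝ}

lemma exists_bound_comp_sub (hG : Continuous G) (x a b : ℝ) :
    ∃ M, ∀ y ∈ Metric.closedBall x 1, ∀ s ∈ uIcc a b, ‖G (y - s)‖ ≤ M := by
  obtain ⟨M, hM⟩ := ((isCompact_closedBall x 1).prod isCompact_uIcc).exists_bound_of_continuousOn
    (f := fun q : ℝ × ℝ => G (q.1 - q.2)) (by fun_prop)
  exact ⟨M, fun y hy s hs => hM (y, s) ⟨hy, hs⟩⟩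

variable {a b : ℝ}

lemma continuous_integral_mul_comp_sub (hk : IntervalIntegrable k volume a b)
    (hG : Continuous G) : Continuous fun x => ∫ s in a..b, k s * G (x - s) := by
  refine continuous_iff_continuousAt.2 fun x => ?_
  obtain ⟨M, hM⟩ := exists_bound_comp_sub hG x a b
  refine intervalIntegral.continuousAt_of_dominated_interval (bound := fun s => ‖k s‖ * M)
    (Eventually.of_forall fun y => (hk.mul_continuousOn (by fun_prop)).def'.aestronglyMeasurable)
    ?_ (hk.norm.mul_const M) (ae_of_all _ fun s _ => by fun_prop)
  filter_upwards [Metric.closedBall_mem_nhds x one_pos] with y hy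
  refine ae_of_all _ fun s hs => ?_
  rw [norm_mul]
  exact mul_le_mul_of_nonneg_left (hM y hy s (uIoc_subset_uIcc hs)) (norm_nonneg _)

lemma hasDerivAt_integral_mul_comp_sub (hk : IntervalIntegrable k volume a b)
    (hG : Continuous G) (hH : ∀ t, HasDerivAt H (G t) t) (x : ℝ) :
    HasDerivAt (fun y => ∫ s in a..b, k s * H (y - s)) (∫ s in a..b, k s * G (x - s)) x := by
  have hHc : Continuous H := continuous_iff_continuousAt.2 fun t => (hH t).continuousAt
  obtain ⟨M, hM⟩ := exists_bound_comp_sub hG x a b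
  refine (intervalIntegral.hasDerivAt_integral_of_dominated_loc_of_deriv_le
    (bound := fun s => ‖k s‖ * M) (Metric.closedBall_mem_nhds x one_pos)
    (Eventually.of_forall fun y => (hk.mul_continuousOn (by fun_prop)).def'.aestronglyMeasurable)
    (hk.mul_continuousOn (by fun_prop))
    (hk.mul_continuousOn (by fun_prop)).def'.aestronglyMeasurable ?_ (hk.norm.mul_const M)
    (ae_of_all _ fun s _ y _ => ((hH _).comp_sub_const y s).const_mul (k s))).2
  refine ae_of_all _ fun s hs y hy => ?_
  rw [norm_mul]
  exact mul_le_mul_of_nonneg_left (hM y hy s (uIoc_subset_uIcc hs)) (norm_nonneg _)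

end Convolution

def halfConv (r : ℝ) (G : ℝ → ℝ) (x : ℝ) : ℝ := ∫ s in (0:ℝ)..π, s ^ r * G (x - s)

section HalfConv

variable {G H : ℝ → ℝ} {q r : ℝ}

lemma continuous_halfConv (hr : -1 < r) (hG : Continuous G) : Continuous (halfConv r G) :=
  continuous_integral_mul_comp_sub (intervalIntegral.intervalIntegrable_rpow' hr) hG

lemma halfConv_eq_of_hasDerivAt (hq : 0 < q) (hG : Continuous G)
    (hH : ∀ t, HasDerivAt H (G t) t) (x : ℝ) :
    halfConv q G x = q * halfConv (q - 1) H x - π ^ q * H (x - π) := by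
  have hHc : Continuous H := continuous_iff_continuousAt.2 fun t => (hH t).continuousAt
  have parts := intervalIntegral.integral_mul_deriv_eq_deriv_mul_of_hasDeriv_right
    (u := fun s => s ^ q) (v := fun s => -H (x - s)) (u' := fun s => q * s ^ (q - 1))
    (v' := fun s => G (x - s)) (a := 0) (b := π)
    (continuous_rpow_const hq.le).continuousOn (by fun_prop)
    (fun s hs => (hasDerivAt_rpow_const
      (Or.inl (lt_of_le_of_lt (le_min le_rfl pi_pos.le) hs.1).ne')).hasDerivWithinAt)
    (fun s _ => by simpa using ((hH (x - s)).comp_const_sub x s).fun_neg.hasDerivWithinAt)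
    ((intervalIntegral.intervalIntegrable_rpow' (by linarith)).const_mul q)
    ((hG.comp (continuous_sub_left x)).intervalIntegrable 0 π)
  rw [halfConv, parts, halfConv, zero_rpow hq.ne']
  simp only [mul_neg, intervalIntegral.integral_neg, mul_assoc, intervalIntegral.integral_const_mul]
  ring

lemma hasDerivAt_halfConv (hq : 0 < q) (hG : Continuous G) (x : ℝ) :
    HasDerivAt (halfConv q G) (q * halfConv (q - 1) G x - π ^ q * G (x - π)) x := by
  set H : ℝ → ℝ := fun t => ∫ u in (0:ℝ)..t, G u
  have hH : ∀ t, HasDerivAt H (G t) t := fun t => (hG.integral_hasStrictDerivAt 0 t).hasDerivAt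
  rw [funext (halfConv_eq_of_hasDerivAt hq hG hH)]
  have hk := intervalIntegral.intervalIntegrable_rpow' (a := 0) (b := π) (r := q - 1) (by linarith)
  exact ((hasDerivAt_integral_mul_comp_sub hk hG hH x).const_mul q).sub
    (((hH (x - π)).comp_sub_const x π).const_mul _)

lemma hasDerivAt_halfConv_neg (hq : 0 < q) (hG : Continuous G) (x : ℝ) :
    HasDerivAt (fun y => halfConv q (fun t => G (-t)) (-y))
      (π ^ q * G (x + π) - q * halfConv (q - 1) (fun t => G (-t)) (-x)) x := by
  refine ((hasDerivAt_halfConv hq (G := fun t => G (-t)) (by fun_prop) (-x)).comp x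
    (hasDerivAt_neg x)).congr_deriv ?_
  simp only [neg_sub', neg_neg, sub_neg_eq_add]
  ring

end HalfConv

lemma integral_withDensity_lam {g : 𝕋 → ℝ} (hg : Measurable g) (hg0 : ∀ y, 0 ≤ g y)
    (f : 𝕋 → ℝ) (t : ℝ) :
    ∫ y, f y ∂(lam.withDensity fun y => ENNReal.ofReal (g y)) =
      (2 * π)⁻¹ * ∫ u in t..t + 2 * π, g u * f u := by
  rw [integral_withDensity_eq_integral_toReal_smul (by fun_prop)
    (ae_of_all _ fun _ => ENNReal.ofReal_lt_top), lam, integral_smul_measure,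
    ← AddCircle.intervalIntegral_preimage (2 * π) t]
  simp [ENNReal.toReal_ofReal (hg0 _), pi_pos.le]

lemma dist_coe_sub_self (x : ℝ) {s : ℝ} (hs : s ∈ Icc 0 π) :
    dist (x : 𝕋) ((x - s : ℝ) : 𝕋) = s := by
  have hs_abs : |s| = s := abs_of_nonneg hs.1
  have hs_half : |s| ≤ |2 * π| / 2 := by
    rw [hs_abs, abs_of_pos two_pi_pos]
    linarith [hs.2]
  rw [dist_eq_norm, ← AddCircle.coe_sub, sub_sub_cancel,
    (AddCircle.norm_coe_eq_abs_iff _ two_pi_pos.ne').2 hs_half, hs_abs]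

section Circle

variable {f : 𝕋 → ℝ} {r : ℝ}

lemma integral_mul_dist_rpow_left (hf : Continuous f) (hr : -1 < r) (x : ℝ) :
    IntervalIntegrable (fun u : ℝ => f u * dist (x : 𝕋) u ^ r) volume (x - π) x ∧
      ∫ u in x - π..x, f u * dist (x : 𝕋) u ^ r = halfConv r (fun t => f t) x := by
  have heq : EqOn (fun s => f ↑(x - s) * dist (x : 𝕋) ↑(x - s) ^ r)
      (fun s => s ^ r * f ↑(x - s)) (uIcc 0 π) := fun s hs => by
    rw [uIcc_of_le pi_pos.le] at hs
    dsimp only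
    rw [dist_coe_sub_self x hs, mul_comm]
  have hint : IntervalIntegrable (fun s => s ^ r * f ↑(x - s)) volume 0 π :=
    (intervalIntegral.intervalIntegrable_rpow' hr).mul_continuousOn (by fun_prop)
  constructor
  · simpa using (hint.congr (heq.symm.mono uIoc_subset_uIcc)).comp_sub_left x |>.symm
  · have hsub := intervalIntegral.integral_comp_sub_left
      (fun u : ℝ => f u * dist (x : 𝕋) u ^ r) x (a := 0) (b := π)
    rw [sub_zero] at hsub
    rw [← hsub, halfConv]
    exact intervalIntegral.integral_congr heq

lemma integral_mul_dist_rpow_right (hf : Continuous f) (hr : -1 < r) (x : ℝ) :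
    IntervalIntegrable (fun u : ℝ => f u * dist (x : 𝕋) u ^ r) volume x (x + π) ∧
      ∫ u in x..x + π, f u * dist (x : 𝕋) u ^ r = halfConv r (fun t => f ↑(-t)) (-x) := by
  set F : ℝ → ℝ := fun v => f (-(v : 𝕋)) * dist ((-x : ℝ) : 𝕋) v ^ r
  have hrefl : (fun u : ℝ => f u * dist (x : 𝕋) u ^ r) = fun u => F (-u) := by
    funext u
    simp [F, dist_neg_neg]
  obtain ⟨hint, heq⟩ :=
    integral_mul_dist_rpow_left (f := fun y => f (-y)) (hf.comp continuous_neg) hr (-x)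
  constructor
  · simpa [add_comm] using ((IntervalIntegrable.iff_comp_neg).1 hint).symm
  · rw [hrefl, intervalIntegral.integral_comp_neg F, neg_add']
    simpa [F] using heq

end Circle

section Reflection

variable {G : ℝ → ℝ} {q : ℝ}

lemma hasDerivAt_halfConv_add_neg (hq : 0 < q) (hG : Continuous G)
    (hper : Function.Periodic G (2 * π)) (x : ℝ) :
    HasDerivAt (fun y => halfConv q G y + halfConv q (fun t => G (-t)) (-y))
      (q * (halfConv (q - 1) G x - halfConv (q - 1) (fun t => G (-t)) (-x))) x := by
  refine ((hasDerivAt_halfConv hq hG x).add (hasDerivAt_halfConv_neg hq hG x)).congr_deriv ?_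
  rw [← hper (x - π), show x - π + 2 * π = x + π by ring]
  ring

lemma hasDerivAt_halfConv_sub_neg (hq : 0 < q) (hG : Continuous G)
    (hper : Function.Periodic G (2 * π)) (x : ℝ) :
    HasDerivAt (fun y => halfConv q G y - halfConv q (fun t => G (-t)) (-y))
      (q * (halfConv (q - 1) G x + halfConv (q - 1) (fun t => G (-t)) (-x))
        - 2 * π ^ q * G (x + π)) x := by
  refine ((hasDerivAt_halfConv hq hG x).sub (hasDerivAt_halfConv_neg hq hG x)).congr_deriv ?_
  rw [← hper (x - π), show x - π + 2 * π = x + π by ring]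
  ring

end Reflection

lemma integral_dist_rpow_withDensity {g : 𝕋 → ℝ} (hg : Continuous g) (hg0 : ∀ y, 0 ≤ g y)
    {r : ℝ} (hr : -1 < r) (x : ℝ) :
    ∫ y, dist (x : 𝕋) y ^ r ∂(lam.withDensity fun y => ENNReal.ofReal (g y)) =
      (2 * π)⁻¹ * (halfConv r (fun t => g t) x + halfConv r (fun t => g ↑(-t)) (-x)) := by
  obtain ⟨hLint, hL⟩ := integral_mul_dist_rpow_left hg hr x
  obtain ⟨hRint, hR⟩ := integral_mul_dist_rpow_right hg hr x
  rw [integral_withDensity_lam hg.measurable hg0 _ (x - π), show x - π + 2 * π = x + π by ring,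
    ← intervalIntegral.integral_add_adjacent_intervals hLint hRint, hL, hR]

lemma contDiff_two_of_hasDerivAt {f f' f'' : ℝ → ℝ} (hf : ∀ x, HasDerivAt f (f' x) x)
    (hf' : ∀ x, HasDerivAt f' (f'' x) x) (hf'' : Continuous f'') : ContDiff ℝ 2 f := by
  rw [show (2 : WithTop ℕ∞) = 1 + 1 from rfl, contDiff_succ_iff_deriv,
    funext fun x => (hf x).deriv, contDiff_one_iff_deriv, funext fun x => (hf' x).deriv]
  exact ⟨fun x => (hf x).differentiableAt, by simp, fun x => (hf' x).differentiableAt, hf''⟩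

theorem Up_second_derivative_general
    (p : ℝ) (hp : 1 < p)
    (g : 𝕋 → ℝ) (hg_cont : Continuous g) (hg_nonneg : ∀ x, 0 ≤ g x)
    (ν : Measure 𝕋)
    (hν : ν = lam.withDensity fun y => ENNReal.ofReal (g y))
    (Up : ℝ → ℝ)
    (hUp : ∀ x : ℝ, Up x = ∫ y, dist ((x : 𝕋)) y ^ p ∂ν) :
    ContDiff ℝ 2 Up ∧
      ∀ x : ℝ,
        deriv (deriv Up) x =
          p * (p - 1) * (∫ y, dist y ((x : 𝕋)) ^ (p - 2) ∂ν)
            - p * π ^ (p - 2) * g ((x : 𝕋) + ((π : ℝ) : 𝕋)) := by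
  set G : ℝ → ℝ := fun t => g t
  have hG : Continuous G := hg_cont.comp (AddCircle.continuous_mk' _)
  have hper : Function.Periodic G (2 * π) := fun t => congrArg g (AddCircle.coe_add_period _ t)
  have hrep (r : ℝ) (hr : -1 < r) (x : ℝ) : ∫ y, dist (x : 𝕋) y ^ r ∂ν =
      (2 * π)⁻¹ * (halfConv r G x + halfConv r (fun t => G (-t)) (-x)) :=
    hν ▸ integral_dist_rpow_withDensity hg_cont hg_nonneg hr x
  have hU (x : ℝ) : HasDerivAt Up ((2 * π)⁻¹ *
      (p * (halfConv (p - 1) G x - halfConv (p - 1) (fun t => G (-t)) (-x)))) x := by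
    rw [funext fun y => (hUp y).trans (hrep p (by linarith) y)]
    exact (hasDerivAt_halfConv_add_neg (by linarith) hG hper x).const_mul _
  have hU' (x : ℝ) : HasDerivAt
      (fun y => (2 * π)⁻¹ * (p * (halfConv (p - 1) G y - halfConv (p - 1) (fun t => G (-t)) (-y))))
      ((2 * π)⁻¹ * (p * ((p - 1) * (halfConv (p - 2) G x + halfConv (p - 2) (fun t => G (-t)) (-x))
        - 2 * π ^ (p - 1) * G (x + π)))) x := by
    have h := hasDerivAt_halfConv_sub_neg (q := p - 1) (by linarith) hG hper x
    rw [show p - 1 - 1 = p - 2 by ring] at h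
    exact (h.const_mul p).const_mul _
  have hcont : Continuous fun x => halfConv (p - 2) G x + halfConv (p - 2) (fun t => G (-t)) (-x) :=
    (continuous_halfConv (by linarith) hG).add
      ((continuous_halfConv (by linarith) (by fun_prop)).comp continuous_neg)
  refine ⟨contDiff_two_of_hasDerivAt hU hU' (by fun_prop), fun x => ?_⟩
  rw [funext fun x => (hU x).deriv, (hU' x).deriv]
  simp_rw [dist_comm _ (x : 𝕋)]
  rw [hrep (p - 2) (by linarith) x, ← AddCircle.coe_add, show p - 1 = p - 2 + 1 by ring,
    rpow_add_one pi_pos.ne']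
  field_simp
  ring

/-- if `ν` has a continuous density `g` w.r.t. `λ` and `p > 1`, then the
potential `U_p(x) = ∫ d(x,y)^p ν(dy)` (viewed as a `2π`-periodic function on `ℝ`)
is `C²` and `U_p''(x) = p(p-1) ∫ d(y,x)^(p-2) ν(dy) - p π^(p-2) g(x+π)`. -/
theorem Up_second_derivative
    (p : ℝ) (hp : 1 < p)
    (g : 𝕋 → ℝ) (hg_cont : Continuous g) (hg_nonneg : ∀ x, 0 ≤ g x)
    (ν : Measure 𝕋) [IsProbabilityMeasure ν]
    (hν : ν = lam.withDensity fun y => ENNReal.ofReal (g y))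
    (Up : ℝ → ℝ)
    (hUp : ∀ x : ℝ, Up x = ∫ y, dist ((x : 𝕋)) y ^ p ∂ν) :
    ContDiff ℝ 2 Up ∧
      ∀ x : ℝ,
        deriv (deriv Up) x =
          p * (p - 1) * (∫ y, dist y ((x : 𝕋)) ^ (p - 2) ∂ν)
            - p * π ^ (p - 2) * g ((x : 𝕋) + ((π : ℝ) : 𝕋)) :=
  Up_second_derivative_general p hp g hg_cont hg_nonneg ν hν Up hUp
end
end

section
/- Let p ≥ 1 and let ν be a probability measure on the circle 𝕋 admitting a continuous density with respect to λ. Then U_p is continuously differentiable on 𝕋 and for every x ∈ 𝕋, U_p'(x) = −p ∫_𝕋 d(x,y)^{p−1} σ(x,y) ν(dy) (with the convention d(x,y)^{p−1} = 1 when p = 1 and y = x). -/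
/-!
For `ν`-almost every `y` (`ν` has no atoms, so `y ≠ x` and `y ≠ x + π` almost surely) the map
`s ↦ d(s, y)^p` is differentiable at `x` with derivative `-p d(x, y)^(p-1) σ(x, y)`, because
near `x` the representative of `y - s` in `(-π, π)` is `s ↦ c - s` for a constant `c ≠ x`.
Since `d(·, y)` is `1`-Lipschitz with values in `[0, π]`, these maps are uniformly
`p π^(p-1)`-Lipschitz, so one may differentiate under the integral sign. The derivative is
continuous by dominated convergence: its integrand is bounded by `π^(p-1)` and continuous in `x`
off the same null set.
-/

open MeasureTheory Real Set Filter

noncomputable section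

/-- The representative of a point of the circle in `(-π, π]`. -/
def rep (z : 𝕋) : ℝ := ((AddCircle.equivIoc (2 * π) (-π) z : Set.Ioc (-π) (-π + 2 * π)) : ℝ)

/-- `σ(x,y) = +1` if the representative of `y - x` lies in `[0, π]`, `-1` otherwise. -/
def sgn (x y : 𝕋) : ℝ := if 0 ≤ rep (y - x) then 1 else -1

open Topology

lemma coe_rep (z : 𝕋) : ((rep z : ℝ) : 𝕋) = z := AddCircle.coe_equivIoc

lemma rep_mem_Ioc (z : 𝕋) : rep z ∈ Ioc (-π) π := by
  have h : rep z ∈ Ioc (-π) (-π + 2 * π) := (AddCircle.equivIoc (2 * π) (-π) z).2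
  rwa [show -π + 2 * π = π by ring] at h

lemma rep_coe {u : ℝ} (hu : u ∈ Ioc (-π) π) : rep (u : 𝕋) = u :=
  AddCircle.equivIoc_coe_of_mem (by simpa only [show -π + 2 * π = π by ring] using hu)

lemma measurable_rep : Measurable rep :=
  measurable_subtype_coe.comp (AddCircle.measurableEquivIoc (2 * π) (-π)).measurable

lemma rep_ne_zero {z : 𝕋} (hz : z ≠ 0) : rep z ≠ 0 := fun h ↦
  hz (by rw [← coe_rep z, h, AddCircle.coe_zero])

lemma abs_rep_le_pi (z : 𝕋) : |rep z| ≤ π :=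
  abs_le.2 ⟨(rep_mem_Ioc z).1.le, (rep_mem_Ioc z).2⟩

lemma abs_rep_lt_pi {z : 𝕋} (hz : z ≠ (π : 𝕋)) : |rep z| < π :=
  abs_lt.2 ⟨(rep_mem_Ioc z).1,
    (rep_mem_Ioc z).2.lt_of_ne fun h ↦ hz (by rw [← coe_rep z, h])⟩

lemma dist_eq_abs_rep (x y : 𝕋) : dist x y = |rep (y - x)| := by
  rw [dist_comm, dist_eq_norm]
  conv_lhs => rw [← coe_rep (y - x)]
  rw [AddCircle.norm_coe_eq_abs_iff _ two_pi_pos.ne', abs_of_pos two_pi_pos]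
  linarith [abs_rep_le_pi (y - x)]

lemma dist_le_pi (x y : 𝕋) : dist x y ≤ π :=
  dist_eq_abs_rep x y ▸ abs_rep_le_pi (y - x)

lemma abs_sgn (x y : 𝕋) : |sgn x y| = 1 := by
  unfold sgn; split_ifs <;> simp

lemma measurable_sgn (x : 𝕋) : Measurable (sgn x) :=
  Measurable.ite (measurableSet_le measurable_const
    (measurable_rep.comp (continuous_id.sub continuous_const).measurable))
    measurable_const measurable_const

lemma abs_dist_rpow_mul_sgn_le {q : ℝ} (hq : 0 ≤ q) (x y : 𝕋) :
    |dist x y ^ q * sgn x y| ≤ π ^ q := by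
  rw [abs_mul, abs_sgn, mul_one, abs_of_nonneg (rpow_nonneg dist_nonneg q)]
  exact rpow_le_rpow dist_nonneg (dist_le_pi x y) hq

lemma hasDerivAt_abs_rpow_of_ne_zero (p : ℝ) {v : ℝ} (hv : v ≠ 0) :
    HasDerivAt (fun w : ℝ ↦ |w| ^ p) (p * (|v| ^ (p - 1) * if 0 ≤ v then 1 else -1)) v := by
  convert (hasDerivAt_abs hv).rpow_const (p := p) (Or.inl (abs_ne_zero.2 hv)) using 1
  rcases hv.lt_or_gt with h | h
  · simp [h, h.not_ge]
  · simp [h, h.le]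

lemma continuousAt_abs_rpow_mul_ite (q : ℝ) {v : ℝ} (hv : v ≠ 0) :
    ContinuousAt (fun w : ℝ ↦ |w| ^ q * if 0 ≤ w then 1 else -1) v := by
  refine (continuous_abs.continuousAt.rpow_const (Or.inl (abs_ne_zero.2 hv))).mul ?_
  rcases hv.lt_or_gt with h | h
  · exact continuousAt_const.congr <|
      (eventually_lt_nhds h).mono fun w hw ↦ (if_neg hw.not_ge).symm
  · exact continuousAt_const.congr <|
      (eventually_gt_nhds h).mono fun w hw ↦ (if_pos hw.le).symm

/-- Away from the cut of `rep` at `π`, the function `s ↦ rep (z - s)` is locally `c - s`. -/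
lemma hasDerivAt_rep_sub_coe {z : 𝕋} {t : ℝ} (hz : z - t ≠ π) :
    HasDerivAt (fun s : ℝ ↦ rep (z - s)) (-1) t := by
  set c := rep (z - t) + t
  have hc : c - t ∈ Ioo (-π) π := by
    simpa [c, ← abs_lt] using abs_rep_lt_pi hz
  have hev : (fun s : ℝ ↦ c - s) =ᶠ[𝓝 t] fun s ↦ rep (z - s) := by
    filter_upwards [(continuous_sub_left c).continuousAt.eventually_mem
      (Ioo_mem_nhds hc.1 hc.2)] with s hs
    rw [← rep_coe (Ioo_subset_Ioc_self hs)]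
    congr 1
    rw [AddCircle.coe_sub, AddCircle.coe_add, coe_rep]
    abel
  simpa using ((hasDerivAt_id t).const_sub c).congr_of_eventuallyEq hev.symm

lemma hasDerivAt_dist_coe_rpow (p : ℝ) {y : 𝕋} {t : ℝ} (h0 : y ≠ t) (hπ : y - t ≠ π) :
    HasDerivAt (fun s : ℝ ↦ dist (s : 𝕋) y ^ p)
      (-p * (dist (t : 𝕋) y ^ (p - 1) * sgn t y)) t := by
  have := (hasDerivAt_abs_rpow_of_ne_zero p (rep_ne_zero (sub_ne_zero.2 h0))).comp t
    (hasDerivAt_rep_sub_coe hπ)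
  simp only [dist_eq_abs_rep, sgn]
  exact this.congr_deriv (by ring)

lemma continuousAt_dist_coe_rpow_mul_sgn (q : ℝ) {y : 𝕋} {t : ℝ} (h0 : y ≠ t)
    (hπ : y - t ≠ π) :
    ContinuousAt (fun s : ℝ ↦ dist (s : 𝕋) y ^ q * sgn s y) t := by
  simp only [dist_eq_abs_rep, sgn]
  exact (continuousAt_abs_rpow_mul_ite q (rep_ne_zero (sub_ne_zero.2 h0))).comp
    (f := fun s : ℝ ↦ rep (y - s)) (hasDerivAt_rep_sub_coe hπ).continuousAt

lemma lipschitzOnWith_rpow_Icc {p : ℝ} (hp : 1 ≤ p) {R : ℝ} (hR : 0 ≤ R) :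
    LipschitzOnWith (Real.toNNReal (p * R ^ (p - 1))) (fun u : ℝ ↦ u ^ p) (Icc 0 R) := by
  refine (convex_Icc 0 R).lipschitzOnWith_of_nnnorm_hasDerivWithin_le
    (fun u _ ↦ (hasDerivAt_rpow_const (Or.inr hp)).hasDerivWithinAt) fun u hu ↦ ?_
  rw [← NNReal.coe_le_coe, coe_nnnorm, Real.coe_toNNReal _ (by positivity),
    norm_of_nonneg (by positivity [hu.1])]
  gcongr
  exacts [hu.1, hu.2]

lemma AddCircle.lipschitzWith_coe (T : ℝ) : LipschitzWith 1 ((↑) : ℝ → AddCircle T) :=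
  LipschitzWith.of_dist_le_mul fun s t ↦ by
    rw [NNReal.coe_one, one_mul, dist_eq_norm, dist_eq_norm, ← AddCircle.coe_sub]
    exact QuotientAddGroup.norm_mk_le_norm

lemma lipschitzWith_dist_coe_rpow {p : ℝ} (hp : 1 ≤ p) (y : 𝕋) :
    LipschitzWith (Real.toNNReal (p * π ^ (p - 1))) (fun s : ℝ ↦ dist (s : 𝕋) y ^ p) := by
  have := (lipschitzOnWith_rpow_Icc hp pi_pos.le).comp
    (((LipschitzWith.dist_left y).comp (AddCircle.lipschitzWith_coe _)).lipschitzOnWith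
      (s := univ))
    fun s _ ↦ ⟨dist_nonneg, dist_le_pi _ _⟩
  rw [mul_one, mul_one] at this
  exact lipschitzOnWith_univ.1 this

instance AddCircle.nullSingletonClass_volume (T : ℝ) [Fact (0 < T)] :
    NullSingletonClass (volume : Measure (AddCircle T)) :=
  ⟨fun z ↦ by
    simpa [(Fact.out : 0 < T).le] using AddCircle.volume_closedBall (x := z) (T := T) 0⟩

instance : NullSingletonClass lam := ⟨fun z ↦ by simp [lam]⟩

section Potential

variable {ν : Measure 𝕋} [NullSingletonClass ν]

lemma ae_ne_and_sub_ne_pi (x : 𝕋) : ∀ᵐ y ∂ν, y ≠ x ∧ y - x ≠ π := by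
  filter_upwards [ν.ae_ne x, ν.ae_ne (x + π)] with y h0 hπ
  exact ⟨h0, fun h ↦ hπ (by rw [← h]; abel)⟩

theorem hasDerivAt_integral_dist_coe_rpow [IsFiniteMeasure ν] {p : ℝ} (hp : 1 ≤ p) (t : ℝ) :
    HasDerivAt (fun s : ℝ ↦ ∫ y, dist (s : 𝕋) y ^ p ∂ν)
      (-p * ∫ y, dist (t : 𝕋) y ^ (p - 1) * sgn t y ∂ν) t := by
  have hmeas (x : 𝕋) (q : ℝ) : Measurable fun y ↦ dist x y ^ q :=
    (measurable_const.dist measurable_id).pow_const q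
  have hint : Integrable (fun y ↦ dist (t : 𝕋) y ^ p) ν :=
    .of_bound (hmeas t p).aestronglyMeasurable (π ^ p) (ae_of_all _ fun y ↦ by
      rw [norm_of_nonneg (rpow_nonneg dist_nonneg p)]
      exact rpow_le_rpow dist_nonneg (dist_le_pi _ y) (by linarith))
  have hlip : ∀ᵐ y ∂ν, LipschitzOnWith (Real.nnabs (p * π ^ (p - 1)))
      (fun s : ℝ ↦ dist (s : 𝕋) y ^ p) univ := ae_of_all _ fun y ↦ by
    rw [Real.nnabs_of_nonneg (by positivity)]
    exact (lipschitzWith_dist_coe_rpow hp y).lipschitzOnWith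
  have hdiff : ∀ᵐ y ∂ν, HasDerivAt (fun s : ℝ ↦ dist (s : 𝕋) y ^ p)
      (-p * (dist (t : 𝕋) y ^ (p - 1) * sgn t y)) t := by
    filter_upwards [ae_ne_and_sub_ne_pi (t : 𝕋)] with y hy
    exact hasDerivAt_dist_coe_rpow p hy.1 hy.2
  have key := (hasDerivAt_integral_of_dominated_loc_of_lip
    (F := fun (s : ℝ) y ↦ dist (s : 𝕋) y ^ p)
    (F' := fun y ↦ -p * (dist (t : 𝕋) y ^ (p - 1) * sgn t y)) univ_mem
    (.of_forall fun s ↦ (hmeas (s : 𝕋) p).aestronglyMeasurable) hint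
    (((hmeas t (p - 1)).mul (measurable_sgn t)).const_mul (-p)).aestronglyMeasurable
    hlip (integrable_const _) hdiff).2
  rwa [integral_const_mul] at key

theorem continuous_integral_dist_coe_rpow_mul_sgn [IsFiniteMeasure ν] {q : ℝ} (hq : 0 ≤ q) :
    Continuous fun s : ℝ ↦ ∫ y, dist (s : 𝕋) y ^ q * sgn s y ∂ν :=
  continuous_iff_continuousAt.2 fun t ↦ continuousAt_of_dominated (bound := fun _ ↦ π ^ q)
    (.of_forall fun s ↦ (((measurable_const.dist measurable_id).pow_const q).mul
      (measurable_sgn s)).aestronglyMeasurable)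
    (.of_forall fun s ↦ ae_of_all _ fun y ↦ abs_dist_rpow_mul_sgn_le hq s y)
    (integrable_const _)
    (by filter_upwards [ae_ne_and_sub_ne_pi (t : 𝕋)] with y hy
        exact continuousAt_dist_coe_rpow_mul_sgn q hy.1 hy.2)

end Potential

theorem Up_first_derivative_general
    (p : ℝ) (hp : 1 ≤ p)
    (g : 𝕋 → ℝ)
    (ν : Measure 𝕋) [IsProbabilityMeasure ν]
    (hν : ν = lam.withDensity fun y => ENNReal.ofReal (g y))
    (Up : ℝ → ℝ)
    (hUp : ∀ x : ℝ, Up x = ∫ y, dist ((x : 𝕋)) y ^ p ∂ν) :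
    ContDiff ℝ 1 Up ∧
      ∀ x : ℝ,
        deriv Up x = -p * ∫ y, dist ((x : 𝕋)) y ^ (p - 1) * sgn ((x : 𝕋)) y ∂ν := by
  have : NullSingletonClass ν := hν ▸ inferInstance
  obtain rfl : Up = fun s : ℝ ↦ ∫ y, dist (s : 𝕋) y ^ p ∂ν := funext hUp
  have hderiv := hasDerivAt_integral_dist_coe_rpow (ν := ν) hp
  refine ⟨contDiff_one_iff_deriv.2 ⟨fun x ↦ (hderiv x).differentiableAt, ?_⟩,
    fun x ↦ (hderiv x).deriv⟩
  rw [funext fun x ↦ (hderiv x).deriv]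
  exact continuous_const.mul (continuous_integral_dist_coe_rpow_mul_sgn (sub_nonneg.2 hp))

/-- if `ν` has a continuous density w.r.t. `λ` and `p ≥ 1`, then the potential
`U_p(x) = ∫ d(x,y)^p ν(dy)` (as a `2π`-periodic function on `ℝ`) is `C¹` and
`U_p'(x) = -p ∫ d(x,y)^(p-1) σ(x,y) ν(dy)`  (with `0^0 = 1`, which is the stated convention
for `p = 1`, `y = x`). -/
theorem Up_first_derivative
    (p : ℝ) (hp : 1 ≤ p)
    (g : 𝕋 → ℝ) (hg_cont : Continuous g) (hg_nonneg : ∀ x, 0 ≤ g x)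
    (ν : Measure 𝕋) [IsProbabilityMeasure ν]
    (hν : ν = lam.withDensity fun y => ENNReal.ofReal (g y))
    (Up : ℝ → ℝ)
    (hUp : ∀ x : ℝ, Up x = ∫ y, dist ((x : 𝕋)) y ^ p ∂ν) :
    ContDiff ℝ 1 Up ∧
      ∀ x : ℝ,
        deriv Up x = -p * ∫ y, dist ((x : 𝕋)) y ^ (p - 1) * sgn ((x : 𝕋)) y ∂ν :=
  Up_first_derivative_general p hp g ν hν Up hUp
end
end

section
/- Let ν be any probability measure on 𝕋 and, for κ > 1/π, let U_{2,κ}(x) := ∫_𝕋 d(x,y)² ν_κ(y) λ(dy) where ν_κ(z) := 2πκ ∫_𝕋 (1 − κ d(y,z))₊ ν(dy). Then for every x ∈ 𝕋 and every 1/π < κ₁ ≤ κ₂, |U_{2,κ₂}(x) − U_{2,κ₁}(x)| ≤ 3π³ log(κ₂/κ₁). In particular κ ↦ U_{2,κ}(x) is locally Lipschitz on (1/π,∞) and its derivative, where it exists, is bounded in absolute value by 3π³/κ. -/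
/-! Integrating out `ν` first (Fubini) writes `U_{2,κ}(x) = ∫ H_κ(v) ν(dv)`, where
`H_κ(v) = ∫_{-1}^{1} d(x, v + s/κ)² (1 - |s|)₊ ds` averages `d(x,·)²` against the triangular
kernel of half-width `1/κ` centred at `v`; the kernel fits into the circle because `πκ ≥ 1`.
The function `d(x,·)²` is `2π`-Lipschitz and passing from `κ₁` to `κ₂` moves every sample point
by at most `1/κ₁ - 1/κ₂ ≤ κ₁⁻¹ log(κ₂/κ₁) < π log(κ₂/κ₁)`, so `|H_{κ₂} - H_{κ₁}| ≤ 4π² log(κ₂/κ₁)`.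
The derivative bound follows by comparing difference quotients with those of `3π³ log`. -/

open MeasureTheory Real Set Filter

noncomputable section

/-- The triangular-kernel regularization of `ν`:
`ν_κ(z) = 2πκ ∫ (1 - κ d(y,z))₊ ν(dy)`, a density w.r.t. `λ`. -/
def nuk (ν : Measure 𝕋) (κ : ℝ) (z : 𝕋) : ℝ := 2 * π * κ * ∫ y, max (1 - κ * dist y z) 0 ∂ν

/-- The regularized potential `U_{2,κ}(x) = ∫ d(x,y)² ν_κ(y) λ(dy)`. -/
def U2k (ν : Measure 𝕋) (κ : ℝ) (x : 𝕋) : ℝ := ∫ y, dist x y ^ 2 * nuk ν κ y ∂lam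

open Topology

instance : IsProbabilityMeasure lam :=
  ⟨by rw [lam, Measure.smul_apply, AddCircle.measure_univ, smul_eq_mul,
    ENNReal.inv_mul_cancel (by simp [Real.pi_pos]) ENNReal.ofReal_ne_top]⟩

instance : lam.IsAddLeftInvariant := by
  rw [lam]; infer_instance

lemma dist_le_pi_s17 (a b : 𝕋) : dist a b ≤ π := by
  simpa [dist_eq_norm, abs_of_pos Real.two_pi_pos] using
    AddCircle.norm_le_half_period (2 * π) Real.two_pi_pos.ne' (x := a - b)

lemma norm_coe_eq_abs {t : ℝ} (ht : |t| ≤ π) : ‖(t : 𝕋)‖ = |t| := by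
  rw [AddCircle.norm_coe_eq_abs_iff _ Real.two_pi_pos.ne', abs_of_pos Real.two_pi_pos]
  linarith

lemma integral_lam_eq_intervalIntegral (f : 𝕋 → ℝ) :
    ∫ w, f w ∂lam = (2 * π)⁻¹ * ∫ t in -π..π, f t := by
  rw [lam, MeasureTheory.integral_smul_measure,
    ← AddCircle.intervalIntegral_preimage (2 * π) (-π), show -π + 2 * π = π by ring,
    ENNReal.toReal_inv, ENNReal.toReal_ofReal Real.two_pi_pos.le, smul_eq_mul]

lemma lipschitzWith_dist_sq {X : Type*} [PseudoMetricSpace X] {D : NNReal}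
    (hD : ∀ a b : X, dist a b ≤ D) (x : X) : LipschitzWith (2 * D) (fun y => dist x y ^ 2) := by
  refine LipschitzWith.of_dist_le_mul fun a b => ?_
  rw [Real.dist_eq, sq_sub_sq, abs_mul, NNReal.coe_mul, NNReal.coe_two]
  gcongr
  · rw [abs_of_nonneg (by positivity)]
    linarith [hD x a, hD x b]
  · simpa only [dist_comm x] using abs_dist_sub_le a b x

def triangleSmoothing (g : 𝕋 → ℝ) (κ : ℝ) (v : 𝕋) : ℝ :=
  ∫ s in (-1 : ℝ)..1, g (v + ↑(s / κ)) * max (1 - |s|) 0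

lemma continuous_triangleSmoothing {g : 𝕋 → ℝ} (hg : Continuous g) (κ : ℝ) :
    Continuous (triangleSmoothing g κ) := by
  have hcoe := AddCircle.continuous_mk' (2 * π)
  exact intervalIntegral.continuous_parametric_intervalIntegral_of_continuous' (by fun_prop) _ _

lemma abs_triangleSmoothing_sub_le {g : 𝕋 → ℝ} {K : NNReal} (hg : LipschitzWith K g)
    (κ₁ κ₂ : ℝ) (v : 𝕋) :
    |triangleSmoothing g κ₂ v - triangleSmoothing g κ₁ v| ≤ 2 * K * |κ₁⁻¹ - κ₂⁻¹| := by
  have hcoe := AddCircle.continuous_mk' (2 * π)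
  have hc := hg.continuous
  rw [triangleSmoothing, triangleSmoothing, ← intervalIntegral.integral_sub
    (by apply Continuous.intervalIntegrable; fun_prop)
    (by apply Continuous.intervalIntegrable; fun_prop)]
  have hbound : ∀ s ∈ uIoc (-1 : ℝ) 1, ‖g (v + ↑(s / κ₂)) * max (1 - |s|) 0
      - g (v + ↑(s / κ₁)) * max (1 - |s|) 0‖ ≤ K * |κ₁⁻¹ - κ₂⁻¹| := by
    intro s hs
    rw [uIoc_of_le (by norm_num)] at hs
    have hs1 : |s| ≤ 1 := abs_le.mpr ⟨hs.1.le, hs.2⟩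
    have hshift : dist (v + ↑(s / κ₂)) (v + ↑(s / κ₁)) ≤ |κ₁⁻¹ - κ₂⁻¹| :=
      calc dist (v + ↑(s / κ₂)) (v + ↑(s / κ₁)) = ‖((s * (κ₂⁻¹ - κ₁⁻¹) : ℝ) : 𝕋)‖ := by
            rw [dist_add_left, dist_eq_norm, ← AddCircle.coe_sub]; ring_nf
        _ ≤ |κ₁⁻¹ - κ₂⁻¹| := by
            refine QuotientAddGroup.norm_mk_le_norm.trans ?_
            rw [Real.norm_eq_abs, abs_mul, abs_sub_comm]
            exact mul_le_of_le_one_left (abs_nonneg _) hs1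
    rw [← sub_mul, norm_mul, Real.norm_eq_abs, Real.norm_eq_abs,
      abs_of_nonneg (le_max_right (1 - |s|) 0)]
    calc |g (v + ↑(s / κ₂)) - g (v + ↑(s / κ₁))| * max (1 - |s|) 0
        ≤ K * |κ₁⁻¹ - κ₂⁻¹| * 1 := by
          gcongr
          · exact (hg.dist_le_mul _ _).trans (by gcongr)
          · exact max_le (by linarith [abs_nonneg s]) zero_le_one
      _ = K * |κ₁⁻¹ - κ₂⁻¹| := mul_one _
  calc _ ≤ K * |κ₁⁻¹ - κ₂⁻¹| * |1 - (-1 : ℝ)| :=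
        intervalIntegral.norm_integral_le_of_norm_le_const hbound
    _ = 2 * K * |κ₁⁻¹ - κ₂⁻¹| := by norm_num; ring

lemma integral_mul_triangleKernel (g : 𝕋 → ℝ) {κ : ℝ} (hκ : 1 ≤ π * κ) (v : 𝕋) :
    ∫ w, g w * (2 * π * κ * max (1 - κ * dist v w) 0) ∂lam = triangleSmoothing g κ v := by
  have hκ0 : 0 < κ := pos_of_mul_pos_right (by linarith) Real.pi_pos.le
  set φ : ℝ → ℝ := fun s => g (v + ↑(s / κ)) * max (1 - |s|) 0
  have hφ : Function.support φ ⊆ Ioc (-1) 1 := by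
    intro s hs
    by_contra hout
    have h1s : 1 ≤ |s| := by
      rw [le_abs']
      by_contra! h
      exact hout ⟨h.1, h.2.le⟩
    exact hs (by simp only [φ, max_eq_right (sub_nonpos.mpr h1s), mul_zero])
  calc ∫ w, g w * (2 * π * κ * max (1 - κ * dist v w) 0) ∂lam
      = ∫ u, g (v + u) * (2 * π * κ * max (1 - κ * ‖u‖) 0) ∂lam := by
        rw [← integral_add_left_eq_self _ v]
        simp only [dist_self_add_right]
    _ = ∫ t in -π..π, κ * φ (κ * t) := by
        rw [integral_lam_eq_intervalIntegral, ← intervalIntegral.integral_const_mul]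
        refine intervalIntegral.integral_congr fun t ht => ?_
        rw [uIcc_of_le (by linarith [Real.pi_pos])] at ht
        simp only [φ, norm_coe_eq_abs (abs_le.mpr ht), mul_div_cancel_left₀ t hκ0.ne',
          abs_mul, abs_of_pos hκ0]
        field_simp
    _ = ∫ s in κ * -π..κ * π, φ s := by
        rw [intervalIntegral.integral_const_mul, ← smul_eq_mul,
          intervalIntegral.smul_integral_comp_mul_left]
    _ = triangleSmoothing g κ v := by
        rw [intervalIntegral.integral_eq_integral_of_support_subset,
          ← intervalIntegral.integral_eq_integral_of_support_subset hφ]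
        · rfl
        · exact hφ.trans (Ioc_subset_Ioc (by linarith) (by linarith))

lemma integral_mul_nuk (ν : Measure 𝕋) [IsFiniteMeasure ν] {g : 𝕋 → ℝ} (hg : Continuous g)
    {κ : ℝ} (hκ : 1 ≤ π * κ) :
    ∫ y, g y * nuk ν κ y ∂lam = ∫ v, triangleSmoothing g κ v ∂ν := by
  have hint : Integrable (Function.uncurry fun y v => g y * (2 * π * κ * max (1 - κ * dist v y) 0))
      (lam.prod ν) :=
    (by fun_prop : Continuous _).integrable_of_hasCompactSupport
      (HasCompactSupport.of_compactSpace _)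
  calc ∫ y, g y * nuk ν κ y ∂lam
      = ∫ y, ∫ v, g y * (2 * π * κ * max (1 - κ * dist v y) 0) ∂ν ∂lam := by
        simp only [nuk, integral_const_mul]
    _ = ∫ v, ∫ y, g y * (2 * π * κ * max (1 - κ * dist v y) 0) ∂lam ∂ν :=
        integral_integral_swap hint
    _ = ∫ v, triangleSmoothing g κ v ∂ν := by
        simp only [integral_mul_triangleKernel g hκ]

lemma abs_integral_mul_nuk_sub_le (ν : Measure 𝕋) [IsFiniteMeasure ν] {g : 𝕋 → ℝ} {K : NNReal}
    (hg : LipschitzWith K g) {κ₁ κ₂ : ℝ} (h₁ : 1 ≤ π * κ₁) (h₂ : 1 ≤ π * κ₂) :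
    |∫ y, g y * nuk ν κ₂ y ∂lam - ∫ y, g y * nuk ν κ₁ y ∂lam|
      ≤ 2 * K * |κ₁⁻¹ - κ₂⁻¹| * ν.real univ := by
  have hint : ∀ κ, Integrable (triangleSmoothing g κ) ν := fun κ =>
    (continuous_triangleSmoothing hg.continuous κ).integrable_of_hasCompactSupport
      (HasCompactSupport.of_compactSpace _)
  rw [integral_mul_nuk ν hg.continuous h₁, integral_mul_nuk ν hg.continuous h₂,
    ← integral_sub (hint κ₂) (hint κ₁)]
  exact norm_integral_le_of_norm_le_const
    (.of_forall fun v => (Real.norm_eq_abs _).trans_le (abs_triangleSmoothing_sub_le hg κ₁ κ₂ v))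

lemma inv_sub_inv_le_inv_mul_log {a b : ℝ} (ha : 0 < a) (hb : 0 < b) :
    a⁻¹ - b⁻¹ ≤ a⁻¹ * log (b / a) :=
  calc a⁻¹ - b⁻¹ = a⁻¹ * (1 - (b / a)⁻¹) := by field_simp
    _ ≤ a⁻¹ * log (b / a) :=
      mul_le_mul_of_nonneg_left (one_sub_inv_le_log_of_pos (by positivity)) (by positivity)

lemma abs_le_of_hasDerivAt_of_abs_sub_le {f g : ℝ → ℝ} {x d e : ℝ} (hf : HasDerivAt f d x)
    (hg : HasDerivAt g e x) (h : ∀ᶠ y in 𝓝[>] x, |f y - f x| ≤ g y - g x) : |d| ≤ e := by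
  have hgt : 𝓝[>] x ≤ 𝓝[≠] x := nhdsWithin_mono x fun y hy => ne_of_gt hy
  refine le_of_tendsto_of_tendsto ((hasDerivAt_iff_tendsto_slope.mp hf).mono_left hgt).abs
    ((hasDerivAt_iff_tendsto_slope.mp hg).mono_left hgt) ?_
  filter_upwards [h, self_mem_nhdsWithin] with y hy hxy
  have hpos : 0 < y - x := sub_pos.mpr hxy
  rw [slope_def_field, slope_def_field, abs_div, abs_of_pos hpos]
  exact div_le_div_of_nonneg_right hy hpos.le

theorem abs_U2k_sub_le (ν : Measure 𝕋) [IsProbabilityMeasure ν] (x : 𝕋) {κ₁ κ₂ : ℝ}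
    (h₁ : 1 / π < κ₁) (h₁₂ : κ₁ ≤ κ₂) :
    |U2k ν κ₂ x - U2k ν κ₁ x| ≤ 3 * π ^ 3 * log (κ₂ / κ₁) := by
  have hπ := Real.pi_pos
  have hκ₁ : 0 < κ₁ := lt_trans (by positivity) h₁
  have hκ₁π : κ₁⁻¹ < π := by rwa [inv_lt_comm₀ hκ₁ hπ, ← one_div]
  have hπκ₁ : 1 ≤ π * κ₁ := by rw [div_lt_iff₀ hπ] at h₁; linarith
  have hπκ₂ : 1 ≤ π * κ₂ := hπκ₁.trans (by gcongr)
  have hlog : 0 ≤ log (κ₂ / κ₁) := log_nonneg ((one_le_div hκ₁).mpr h₁₂)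
  have hlip : LipschitzWith (2 * NNReal.pi) (fun y => dist x y ^ 2) :=
    lipschitzWith_dist_sq (by simpa using dist_le_pi_s17) x
  have hU := abs_integral_mul_nuk_sub_le ν hlip hπκ₁ hπκ₂
  simp only [probReal_univ, mul_one, NNReal.coe_mul, NNReal.coe_ofNat,
    NNReal.coe_real_pi] at hU
  calc |U2k ν κ₂ x - U2k ν κ₁ x| ≤ 2 * (2 * π) * |κ₁⁻¹ - κ₂⁻¹| := hU
    _ = 4 * π * (κ₁⁻¹ - κ₂⁻¹) := by
        rw [abs_of_nonneg (sub_nonneg.mpr (inv_anti₀ hκ₁ h₁₂))]; ring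
    _ ≤ 4 * π * (κ₁⁻¹ * log (κ₂ / κ₁)) := by
        gcongr; exact inv_sub_inv_le_inv_mul_log hκ₁ (hκ₁.trans_le h₁₂)
    _ ≤ 4 * π * (π * log (κ₂ / κ₁)) := by gcongr
    _ ≤ 3 * π ^ 3 * log (κ₂ / κ₁) := by
        nlinarith [mul_nonneg (mul_nonneg (by linarith [pi_gt_three] : (0 : ℝ) ≤ 3 * π - 4)
          (sq_nonneg π)) hlog]

/-- Lemma `pakU`: for any probability measure `ν` on the circle,
`|U_{2,κ₂}(x) - U_{2,κ₁}(x)| ≤ 3π³ log(κ₂/κ₁)` for `1/π < κ₁ ≤ κ₂`; in particular wherever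
`κ ↦ U_{2,κ}(x)` is differentiable on `(1/π, ∞)` its derivative is bounded by `3π³/κ`. -/
theorem regularized_potential_kappa_derivative_bound
    (ν : Measure 𝕋) [IsProbabilityMeasure ν] :
    (∀ (x : 𝕋) (κ₁ κ₂ : ℝ), 1 / π < κ₁ → κ₁ ≤ κ₂ →
        |U2k ν κ₂ x - U2k ν κ₁ x| ≤ 3 * π ^ 3 * Real.log (κ₂ / κ₁)) ∧
      ∀ (x : 𝕋) (κ : ℝ), 1 / π < κ → ∀ d : ℝ,
        HasDerivAt (fun k => U2k ν k x) d κ → |d| ≤ 3 * π ^ 3 / κ := by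
  refine ⟨fun x κ₁ κ₂ h₁ h₁₂ => abs_U2k_sub_le ν x h₁ h₁₂, fun x κ hκ d hd => ?_⟩
  have hκ0 : 0 < κ := lt_trans (by positivity) hκ
  rw [div_eq_mul_inv]
  refine abs_le_of_hasDerivAt_of_abs_sub_le hd ((hasDerivAt_log hκ0.ne').const_mul _) ?_
  filter_upwards [self_mem_nhdsWithin] with y hy
  rw [← mul_sub, ← log_div (hκ0.trans hy).ne' hκ0.ne']
  exact abs_U2k_sub_le ν x hκ (le_of_lt hy)
end
end

section
/- Let X be a compact, path-connected topological space and U : X → ℝ continuous. For x, y ∈ X define the minimal elevation c(x,y) := inf over continuous paths γ : [0,1] → X with γ(0) = x and γ(1) = y of sup_{t ∈ [0,1]} U(γ(t)). Then for every global minimum x₀ of U (i.e. U(x₀) = inf_X U), sup_{x,y ∈ X} ( c(x,y) − U(x) − U(y) ) + inf_X U = sup_{y ∈ X} ( c(x₀,y) − U(y) ). In particular the right-hand side does not depend on the choice of the global minimum x₀. -/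
/-!
The minimal elevation `c` is symmetric and satisfies the ultrametric inequality
`c(x, y) ≤ max (c(x, x₀), c(x₀, y))`: concatenate nearly optimal paths through `x₀`.
Hence if, say, `c(x₀, x) ≤ c(x₀, y)`, then
`c(x, y) - U(x) - U(y) + U(x₀) ≤ c(x₀, y) - U(y)` because `U(x₀) ≤ U(x)`, which gives `≤`;
the pairs `(x₀, y)` give `≥`.
-/

open Set

section

variable {X : Type*} [TopologicalSpace X] {U : X → ℝ} {x y z : X}

namespace Path

noncomputable def elevation (U : X → ℝ) (γ : Path x y) : ℝ :=
  ⨆ t, U (γ t)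

theorem le_elevation (hU : Continuous U) (γ : Path x y) (t : unitInterval) :
    U (γ t) ≤ γ.elevation U :=
  le_ciSup (isCompact_range (hU.comp γ.continuous)).bddAbove t

theorem elevation_le_of_forall_le {M : ℝ} (hM : ∀ z, U z ≤ M) (γ : Path x y) :
    γ.elevation U ≤ M :=
  ciSup_le fun _ => hM _

theorem elevation_symm (γ : Path x y) : γ.symm.elevation U = γ.elevation U :=
  unitInterval.symm_involutive.surjective.iSup_comp fun t => U (γ t)

theorem elevation_trans_le (hU : Continuous U) (γ : Path x y) (δ : Path y z) :
    (γ.trans δ).elevation U ≤ max (γ.elevation U) (δ.elevation U) := by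
  refine ciSup_le fun t => ?_
  rw [Path.trans_apply]
  split_ifs
  · exact le_max_of_le_left (γ.le_elevation hU _)
  · exact le_max_of_le_right (δ.le_elevation hU _)

end Path

noncomputable def minimalElevation (U : X → ℝ) (x y : X) : ℝ :=
  ⨅ γ : Path x y, γ.elevation U

theorem minimalElevation_le_elevation (hU : Continuous U) (γ : Path x y) :
    minimalElevation U x y ≤ γ.elevation U :=
  ciInf_le ⟨U x, forall_mem_range.2 fun δ => by simpa using δ.le_elevation hU 0⟩ γ

theorem minimalElevation_le_of_forall_le (hU : Continuous U) {M : ℝ} (hM : ∀ z, U z ≤ M)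
    (hxy : Joined x y) : minimalElevation U x y ≤ M :=
  (minimalElevation_le_elevation hU hxy.somePath).trans (Path.elevation_le_of_forall_le hM _)

theorem minimalElevation_swap_le (hU : Continuous U) (hxy : Joined x y) :
    minimalElevation U y x ≤ minimalElevation U x y :=
  have : Nonempty (Path x y) := hxy
  le_ciInf fun γ => γ.elevation_symm (U := U) ▸ minimalElevation_le_elevation hU γ.symm

theorem minimalElevation_comm (hU : Continuous U) (hxy : Joined x y) :
    minimalElevation U x y = minimalElevation U y x :=
  le_antisymm (minimalElevation_swap_le hU hxy.symm) (minimalElevation_swap_le hU hxy)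

theorem minimalElevation_le_max (hU : Continuous U) (hxy : Joined x y) (hyz : Joined y z) :
    minimalElevation U x z ≤ max (minimalElevation U x y) (minimalElevation U y z) := by
  have : Nonempty (Path x y) := hxy
  have : Nonempty (Path y z) := hyz
  by_contra! h
  obtain ⟨γ, hγ⟩ := exists_lt_of_ciInf_lt ((le_max_left _ _).trans_lt h)
  obtain ⟨δ, hδ⟩ := exists_lt_of_ciInf_lt ((le_max_right _ _).trans_lt h)
  exact ((minimalElevation_le_elevation hU (γ.trans δ)).trans
    (γ.elevation_trans_le hU δ)).not_gt (max_lt hγ hδ)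

theorem exists_minimalElevation_sub_le [PathConnectedSpace X] (hU : Continuous U) {x₀ : X}
    (hx₀ : ∀ z, U x₀ ≤ U z) (x y : X) :
    ∃ z, minimalElevation U x y - U x - U y + U x₀ ≤ minimalElevation U x₀ z - U z := by
  have hx := PathConnectedSpace.joined x x₀
  have hxy := minimalElevation_le_max hU hx (PathConnectedSpace.joined x₀ y)
  rw [minimalElevation_comm hU hx] at hxy
  rcases max_cases (minimalElevation U x₀ x) (minimalElevation U x₀ y) with ⟨h, -⟩ | ⟨h, -⟩
  · exact ⟨x, by linarith [hx₀ y]⟩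
  · exact ⟨y, by linarith [hx₀ x]⟩

end

/-- identity `bU2` for the critical simulated-annealing constant: let `X` be a
compact path-connected space and `U : X → ℝ` continuous. With
`c(x,y) = inf over paths γ from x to y of sup_t U(γ(t))` (the minimal elevation), for every
global minimum `x₀` of `U`,
`sup_{x,y} (c(x,y) - U(x) - U(y)) + inf U = sup_y (c(x₀,y) - U(y))`. -/
theorem critical_depth_identity
    (X : Type*) [TopologicalSpace X] [CompactSpace X] [PathConnectedSpace X]
    (U : X → ℝ) (hU : Continuous U)
    (c : X → X → ℝ)
    (hc : ∀ x y : X, c x y = ⨅ γ : Path x y, ⨆ t : unitInterval, U (γ t))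
    (x₀ : X) (hx₀ : U x₀ = ⨅ x, U x) :
    (⨆ q : X × X, (c q.1 q.2 - U q.1 - U q.2)) + (⨅ x, U x)
      = ⨆ y : X, (c x₀ y - U y) := by
  obtain rfl : c = minimalElevation U := funext₂ hc
  obtain ⟨M, hM⟩ := (isCompact_range hU).bddAbove
  have hUM : ∀ z, U z ≤ M := fun z => hM (mem_range_self z)
  have hmin : ∀ z, U x₀ ≤ U z := fun z => hx₀ ▸ ciInf_le (isCompact_range hU).bddBelow z
  have hcM : ∀ x y, minimalElevation U x y ≤ M := fun x y =>
    minimalElevation_le_of_forall_le hU hUM (PathConnectedSpace.joined x y)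
  have hbdd₁ : BddAbove (range fun y => minimalElevation U x₀ y - U y) :=
    ⟨M - U x₀, forall_mem_range.2 fun y => by linarith [hcM x₀ y, hmin y]⟩
  have hbdd₂ : BddAbove (range fun q : X × X => minimalElevation U q.1 q.2 - U q.1 - U q.2) :=
    ⟨M - U x₀ - U x₀, forall_mem_range.2 fun q => by linarith [hcM q.1 q.2, hmin q.1, hmin q.2]⟩
  rw [← hx₀]
  refine le_antisymm ?_ (ciSup_le fun y => ?_)
  · rw [← le_sub_iff_add_le]
    refine ciSup_le fun q => le_sub_iff_add_le.2 ?_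
    obtain ⟨z, hz⟩ := exists_minimalElevation_sub_le hU hmin q.1 q.2
    exact hz.trans (le_ciSup hbdd₁ z)
  · linarith [le_ciSup hbdd₂ (x₀, y)]
end
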